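/- (Pointwise consequences of D = 0, algebraic form of Proposition 3.1 (1)–(3).) Let n ≥ 3, let m, λ, ρ be real numbers with m ≠ 0, let Ric be a symmetric bilinear form on V with scal := Σ_i Ric(e_i,e_i), and let v ≠ 0 and p in V satisfy scal = (n−1)λ − (m−1)ρ and Ric(X,v) = ρ⟨X,v⟩ − (m/2)⟨X,p⟩ for all X ∈ V. If the D-tensor built from Ric, scal and v vanishes identically, then: (1) p is a scalar multiple of v; (2) v is an eigenvector of Ric, i.e., there is κ ∈ ℝ with Ric(X,v) = κ⟨X,v⟩ for all X; (3) there is μ ∈ ℝ with Ric(a,b) = μ⟨a,b⟩ for all a,b ⊥ v. In particular Ric has at most two distinct eigenvalues: one in the direction of v and one of multiplicity at least n−1 on v^⊥. -/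

import Mathlib

/-!
Evaluating the vanishing D-tensor at `(X, v, v)` leaves `-(1/(n-1))` times
`Ric(X,v)|v|² - Ric(v,v)⟨X,v⟩`, so `v` is an eigenvector of `Ric`; the identity
`Ric(v) = ρ v - (m/2) p` then forces `p ∥ v`. Evaluating it at `(v, a, b)` with
`a, b ⊥ v` leaves a linear relation between `Ric(a,b)` and `⟨a,b⟩` whose coefficient of
`Ric(a,b)` is `|v|²/(n-2) ≠ 0`.
-/

open scoped InnerProductSpace

section DTensor

variable {E : Type*} [NormedAddCommGroup E] [InnerProductSpace ℝ E]

noncomputable def dTensor (N scal : ℝ) (Ric : LinearMap.BilinForm ℝ E) (v X Y Z : E) : ℝ :=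
  1 / ((N - 1) * (N - 2)) * (Ric X v * ⟪Y, Z⟫_ℝ - Ric Y v * ⟪X, Z⟫_ℝ)
    + 1 / (N - 2) * (Ric Y Z * ⟪X, v⟫_ℝ - Ric X Z * ⟪Y, v⟫_ℝ)
    - scal / ((N - 1) * (N - 2)) * (⟪X, v⟫_ℝ * ⟪Y, Z⟫_ℝ - ⟪Y, v⟫_ℝ * ⟪X, Z⟫_ℝ)

variable {N scal : ℝ} {Ric : LinearMap.BilinForm ℝ E} {v : E}

theorem dTensor_apply_self_self (X : E) :
    dTensor N scal Ric v X v v =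
      (1 / ((N - 1) * (N - 2)) - 1 / (N - 2)) * (Ric X v * ⟪v, v⟫_ℝ - Ric v v * ⟪X, v⟫_ℝ) := by
  unfold dTensor
  ring

theorem dTensor_self_apply_of_inner_eq_zero {a b : E} (ha : ⟪a, v⟫_ℝ = 0) (hb : ⟪b, v⟫_ℝ = 0) :
    dTensor N scal Ric v v a b =
      (Ric v v - scal * ⟪v, v⟫_ℝ) / ((N - 1) * (N - 2)) * ⟪a, b⟫_ℝ
        + Ric a b * ⟪v, v⟫_ℝ / (N - 2) := by
  rw [real_inner_comm] at hb
  simp only [dTensor, ha, hb, mul_zero, sub_zero]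
  ring

theorem exists_apply_eq_mul_inner_of_dTensor_eq_zero (hN₁ : N ≠ 1) (hN₂ : N ≠ 2) (hv : v ≠ 0)
    (hD : ∀ X, dTensor N scal Ric v X v v = 0) :
    ∃ κ : ℝ, ∀ X, Ric X v = κ * ⟪X, v⟫_ℝ := by
  have hvv : ⟪v, v⟫_ℝ ≠ 0 := inner_self_ne_zero.mpr hv
  have hcoeff : 1 / ((N - 1) * (N - 2)) - 1 / (N - 2) ≠ 0 := by
    have hN₁' : N - 1 ≠ 0 := sub_ne_zero.mpr hN₁
    have hN₂' : N - 2 ≠ 0 := sub_ne_zero.mpr hN₂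
    rw [show 1 / ((N - 1) * (N - 2)) - 1 / (N - 2) = -(1 / (N - 1)) by field_simp; ring]
    simpa using hN₁'
  refine ⟨Ric v v / ⟪v, v⟫_ℝ, fun X => ?_⟩
  have h := hD X
  rw [dTensor_apply_self_self, mul_eq_zero, or_iff_right hcoeff, sub_eq_zero] at h
  field_simp
  linarith

theorem exists_apply_eq_mul_inner_of_dTensor_eq_zero_of_inner_eq_zero (hN₁ : N ≠ 1)
    (hN₂ : N ≠ 2) (hv : v ≠ 0) (hD : ∀ a b, dTensor N scal Ric v v a b = 0) :
    ∃ μ : ℝ, ∀ a b, ⟪a, v⟫_ℝ = 0 → ⟪b, v⟫_ℝ = 0 → Ric a b = μ * ⟪a, b⟫_ℝ := by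
  have hvv : ⟪v, v⟫_ℝ ≠ 0 := inner_self_ne_zero.mpr hv
  have hN₁' : N - 1 ≠ 0 := sub_ne_zero.mpr hN₁
  have hN₂' : N - 2 ≠ 0 := sub_ne_zero.mpr hN₂
  refine ⟨(scal * ⟪v, v⟫_ℝ - Ric v v) / ((N - 1) * ⟪v, v⟫_ℝ), fun a b ha hb => ?_⟩
  have h := hD a b
  rw [dTensor_self_apply_of_inner_eq_zero ha hb] at h
  field_simp at h ⊢
  linear_combination h

end DTensor

theorem stmt_6_general (n : ℕ) (hn : 3 ≤ n) (m rho : ℝ) (hm : m ≠ 0)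
    (Ric : EuclideanSpace ℝ (Fin n) →ₗ[ℝ] EuclideanSpace ℝ (Fin n) →ₗ[ℝ] ℝ)
    (scal : ℝ)
    (v p : EuclideanSpace ℝ (Fin n)) (hv : v ≠ 0)
    (hRicv : ∀ X, Ric X v = rho * ⟪X, v⟫_ℝ - (m / 2) * ⟪X, p⟫_ℝ)
    (D : EuclideanSpace ℝ (Fin n) → EuclideanSpace ℝ (Fin n) →
      EuclideanSpace ℝ (Fin n) → ℝ)
    (hD : ∀ X Y Z, D X Y Z =
      (1 / (((n : ℝ) - 1) * ((n : ℝ) - 2))) *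
        (Ric X v * ⟪Y, Z⟫_ℝ - Ric Y v * ⟪X, Z⟫_ℝ)
      + (1 / ((n : ℝ) - 2)) * (Ric Y Z * ⟪X, v⟫_ℝ - Ric X Z * ⟪Y, v⟫_ℝ)
      - (scal / (((n : ℝ) - 1) * ((n : ℝ) - 2))) *
          (⟪X, v⟫_ℝ * ⟪Y, Z⟫_ℝ - ⟪Y, v⟫_ℝ * ⟪X, Z⟫_ℝ))
    (hD0 : ∀ X Y Z, D X Y Z = 0) :
    (∃ c : ℝ, p = c • v) ∧
    (∃ κ : ℝ, ∀ X, Ric X v = κ * ⟪X, v⟫_ℝ) ∧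
    (∃ μ : ℝ, ∀ a b, ⟪a, v⟫_ℝ = 0 → ⟪b, v⟫_ℝ = 0 → Ric a b = μ * ⟪a, b⟫_ℝ) := by
  have hn₁ : (n : ℝ) ≠ 1 := by norm_cast; omega
  have hn₂ : (n : ℝ) ≠ 2 := by norm_cast; omega
  have hDT : ∀ X Y Z, dTensor n scal Ric v X Y Z = 0 := fun X Y Z =>
    (hD X Y Z).symm.trans (hD0 X Y Z)
  obtain ⟨κ, hκ⟩ :=
    exists_apply_eq_mul_inner_of_dTensor_eq_zero hn₁ hn₂ hv fun X => hDT X v v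
  refine ⟨⟨2 * (rho - κ) / m, ext_inner_left ℝ fun X => ?_⟩, ⟨κ, hκ⟩,
    exists_apply_eq_mul_inner_of_dTensor_eq_zero_of_inner_eq_zero hn₁ hn₂ hv (hDT v)⟩
  have h := hRicv X
  rw [hκ] at h
  rw [real_inner_smul_right]
  field_simp
  linear_combination 2 * h

/-- Pointwise consequences of `D = 0` (algebraic form of Proposition 3.1 (1)–(3)):
`p` is a multiple of `v`, `v` is an eigenvector of `Ric`, and `Ric` is a multiple
of the metric on the orthogonal complement of `v`. -/
theorem stmt_6 (n : ℕ) (hn : 3 ≤ n) (m lam rho : ℝ) (hm : m ≠ 0)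
    (e : OrthonormalBasis (Fin n) ℝ (EuclideanSpace ℝ (Fin n)))
    (Ric : EuclideanSpace ℝ (Fin n) →ₗ[ℝ] EuclideanSpace ℝ (Fin n) →ₗ[ℝ] ℝ)
    (hRicSymm : ∀ X Y, Ric X Y = Ric Y X)
    (scal : ℝ) (hscal : scal = ∑ i, Ric (e i) (e i))
    (v p : EuclideanSpace ℝ (Fin n)) (hv : v ≠ 0)
    (hscalEq : scal = ((n : ℝ) - 1) * lam - (m - 1) * rho)
    (hRicv : ∀ X, Ric X v = rho * ⟪X, v⟫_ℝ - (m / 2) * ⟪X, p⟫_ℝ)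
    (D : EuclideanSpace ℝ (Fin n) → EuclideanSpace ℝ (Fin n) →
      EuclideanSpace ℝ (Fin n) → ℝ)
    (hD : ∀ X Y Z, D X Y Z =
      (1 / (((n : ℝ) - 1) * ((n : ℝ) - 2))) *
        (Ric X v * ⟪Y, Z⟫_ℝ - Ric Y v * ⟪X, Z⟫_ℝ)
      + (1 / ((n : ℝ) - 2)) * (Ric Y Z * ⟪X, v⟫_ℝ - Ric X Z * ⟪Y, v⟫_ℝ)
      - (scal / (((n : ℝ) - 1) * ((n : ℝ) - 2))) *
          (⟪X, v⟫_ℝ * ⟪Y, Z⟫_ℝ - ⟪Y, v⟫_ℝ * ⟪X, Z⟫_ℝ))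
    (hD0 : ∀ X Y Z, D X Y Z = 0) :
    (∃ c : ℝ, p = c • v) ∧
    (∃ κ : ℝ, ∀ X, Ric X v = κ * ⟪X, v⟫_ℝ) ∧
    (∃ μ : ℝ, ∀ a b, ⟪a, v⟫_ℝ = 0 → ⟪b, v⟫_ℝ = 0 → Ric a b = μ * ⟪a, b⟫_ℝ) :=
  stmt_6_general n hn m rho hm Ric scal v p hv hRicv D hD hD0
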